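/- Let G be a finite connected simple graph of order n ≥ 2. Then γ(M(G ∘ P₂)) = n + γ(M(G)), where G ∘ P₂ denotes the 2-corona of G and γ denotes the domination number. -/

import Mathlib

/-- `S` is a dominating set of the graph `H`. -/
def IsDomSet {V : Type*} (H : SimpleGraph V) (S : Set V) : Prop :=
  ∀ v : V, v ∈ S ∨ ∃ s ∈ S, H.Adj v s

/-- The domination number of a graph `H`. -/
noncomputable def domNum {V : Type*} (H : SimpleGraph V) : ℕ :=
  sInf {k : ℕ | ∃ S : Set V, IsDomSet H S ∧ S.ncard = k}

/-- The middle graph `M(G)` of a graph `G`: its vertices are the vertices and edges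
of `G`; a vertex is adjacent to the edges incident to it, and two edges are adjacent
iff they are distinct and share an endpoint. -/
def middleGraph {V : Type*} (G : SimpleGraph V) : SimpleGraph (V ⊕ G.edgeSet) where
  Adj x y :=
    match x, y with
    | Sum.inl _, Sum.inl _ => False
    | Sum.inl v, Sum.inr e => v ∈ (e : Sym2 V)
    | Sum.inr e, Sum.inl v => v ∈ (e : Sym2 V)
    | Sum.inr e, Sum.inr f => e ≠ f ∧ ∃ v, v ∈ (e : Sym2 V) ∧ v ∈ (f : Sym2 V)
  symm := by
    constructor
    rintro (v | e) (w | f) h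
    · exact h.elim
    · exact h
    · exact h
    · exact ⟨Ne.symm h.1, h.2.imp fun v hv => ⟨hv.2, hv.1⟩⟩
  loopless := by
    constructor
    rintro (v | e) h
    · exact h.elim
    · exact h.1 rfl

/-- The 2-corona `G ∘ P₂`: attach to each vertex `v` of `G` a path `v — v' — v''`. -/
def twoCorona {V : Type*} (G : SimpleGraph V) : SimpleGraph (V ⊕ V ⊕ V) where
  Adj x y :=
    match x, y with
    | Sum.inl a, Sum.inl b => G.Adj a b
    | Sum.inl a, Sum.inr (Sum.inl b) => a = b
    | Sum.inr (Sum.inl a), Sum.inl b => b = a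
    | Sum.inr (Sum.inl a), Sum.inr (Sum.inr b) => a = b
    | Sum.inr (Sum.inr a), Sum.inr (Sum.inl b) => b = a
    | _, _ => False
  symm := by
    constructor
    rintro (a | a | a) (b | b | b) h <;> simp_all
    exact h.symm
  loopless := by
    constructor
    rintro (a | a | a) h <;> simp_all

/-!
In the middle graph of `G ∘ P₂`, the pendant vertex `v''` is dominated only by itself or by the
pendant edge `v'v''`, so every dominating set spends at least `n` elements on these. No element
outside them is adjacent to a vertex or edge of `G`, so collapsing each attached path onto its
root sends the remaining elements onto a dominating set of `M(G)`. Conversely, a dominating set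
of `M(G)` together with the `n` pendant edges dominates `M(G ∘ P₂)`.
-/

section Domination

variable {V U : Type*} {H : SimpleGraph V} {K : SimpleGraph U}

lemma domNum_le_ncard {S : Set V} (hS : IsDomSet H S) : domNum H ≤ S.ncard :=
  Nat.sInf_le (⟨S, hS, rfl⟩ : ∃ T, IsDomSet H T ∧ T.ncard = S.ncard)

variable (H) in
lemma exists_isDomSet_ncard_eq_domNum : ∃ S, IsDomSet H S ∧ S.ncard = domNum H :=
  Nat.sInf_mem (⟨_, Set.univ, fun _ => Or.inl trivial, rfl⟩ :
    ∃ k, ∃ S, IsDomSet H S ∧ S.ncard = k)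

lemma isDomSet_image_of_retraction {T : Set V} (g : V → U) (s : U → V)
    (hgs : Function.LeftInverse g s) (hT : ∀ u, s u ∈ T ∨ ∃ t ∈ T, H.Adj (s u) t)
    (hg : ∀ u w, H.Adj (s u) w → g w = u ∨ K.Adj u (g w)) :
    IsDomSet K (g '' T) := by
  intro u
  rcases hT u with hu | ⟨t, ht, hadj⟩
  · exact Or.inl ⟨s u, hu, hgs u⟩
  · rcases hg u t hadj with h | h
    · exact Or.inl ⟨t, ht, h⟩
    · exact Or.inr ⟨g t, ⟨t, ht, rfl⟩, h⟩

end Domination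

section MiddleGraph

variable {V : Type*} (G : SimpleGraph V)

@[simp] lemma middleGraph_not_adj_inl_inl (v w : V) :
    ¬ (middleGraph G).Adj (.inl v) (.inl w) := id

@[simp] lemma middleGraph_adj_inl_inr (v : V) (e : G.edgeSet) :
    (middleGraph G).Adj (.inl v) (.inr e) ↔ v ∈ (e : Sym2 V) := Iff.rfl

@[simp] lemma middleGraph_adj_inr_inl (e : G.edgeSet) (v : V) :
    (middleGraph G).Adj (.inr e) (.inl v) ↔ v ∈ (e : Sym2 V) := Iff.rfl

@[simp] lemma middleGraph_adj_inr_inr (e f : G.edgeSet) :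
    (middleGraph G).Adj (.inr e) (.inr f) ↔
      e ≠ f ∧ ∃ v, v ∈ (e : Sym2 V) ∧ v ∈ (f : Sym2 V) := Iff.rfl

end MiddleGraph

namespace twoCorona

variable {V : Type*} (G : SimpleGraph V)

def baseEdge (e : G.edgeSet) : (twoCorona G).edgeSet :=
  ⟨e.1.map Sum.inl, by
    obtain ⟨e, he⟩ := e
    induction e using Sym2.ind with
    | _ a b => exact he⟩

def spokeEdge (a : V) : (twoCorona G).edgeSet :=
  ⟨s(.inl a, .inr (.inl a)), rfl⟩

def pendantEdge (a : V) : (twoCorona G).edgeSet :=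
  ⟨s(.inr (.inl a), .inr (.inr a)), rfl⟩

variable {G}

@[simp] lemma mem_baseEdge {e : G.edgeSet} {x : V ⊕ V ⊕ V} :
    x ∈ (baseEdge G e : Sym2 (V ⊕ V ⊕ V)) ↔ ∃ v ∈ (e : Sym2 V), .inl v = x :=
  Sym2.mem_map

@[simp] lemma mem_spokeEdge {a : V} {x : V ⊕ V ⊕ V} :
    x ∈ (spokeEdge G a : Sym2 (V ⊕ V ⊕ V)) ↔ x = .inl a ∨ x = .inr (.inl a) :=
  Sym2.mem_iff

@[simp] lemma mem_pendantEdge {a : V} {x : V ⊕ V ⊕ V} :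
    x ∈ (pendantEdge G a : Sym2 (V ⊕ V ⊕ V)) ↔ x = .inr (.inl a) ∨ x = .inr (.inr a) :=
  Sym2.mem_iff

variable (G)

def edgeOfSum : G.edgeSet ⊕ V ⊕ V → (twoCorona G).edgeSet :=
  Sum.elim (baseEdge G) (Sum.elim (spokeEdge G) (pendantEdge G))

lemma edgeOfSum_injective : Function.Injective (edgeOfSum G) := by
  rintro (e | a | a) (e' | b | b) h <;>
    simp only [edgeOfSum, Sum.elim_inl, Sum.elim_inr, Subtype.ext_iff] at h
  · exact congrArg _ (Subtype.ext (Sym2.map.injective Sum.inl_injective h))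
  all_goals try (simp_all [spokeEdge, pendantEdge]; done)
  all_goals rw [Sym2.ext_iff] at h
  · simpa using h (.inr (.inl b))
  · simpa using h (.inr (.inl b))
  · simpa using h (.inr (.inl a))
  · simpa using h (.inr (.inl a))

lemma edgeOfSum_surjective : Function.Surjective (edgeOfSum G) := by
  rintro ⟨f, hf⟩
  induction f using Sym2.ind with
  | _ x y =>
    rcases x with a | a | a <;> rcases y with b | b | b <;> try exact hf.elim
    · exact ⟨.inl ⟨s(a, b), hf⟩, rfl⟩
    · obtain rfl : a = b := hf
      exact ⟨.inr (.inl a), rfl⟩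
    · obtain rfl : b = a := hf
      exact ⟨.inr (.inl b), Subtype.ext Sym2.eq_swap⟩
    · obtain rfl : a = b := hf
      exact ⟨.inr (.inr a), rfl⟩
    · obtain rfl : b = a := hf
      exact ⟨.inr (.inr b), Subtype.ext Sym2.eq_swap⟩

variable {G}

@[simp] lemma baseEdge_inj {e e' : G.edgeSet} : baseEdge G e = baseEdge G e' ↔ e = e' :=
  (edgeOfSum_injective G).eq_iff.trans Sum.inl_injective.eq_iff

@[simp] lemma pendantEdge_ne_baseEdge (a : V) (e : G.edgeSet) : pendantEdge G a ≠ baseEdge G e :=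
  fun h => Sum.inr_ne_inl (@edgeOfSum_injective _ G (.inr (.inr a)) (.inl e) h)

@[simp] lemma pendantEdge_ne_spokeEdge (a b : V) : pendantEdge G a ≠ spokeEdge G b :=
  fun h => by simpa using @edgeOfSum_injective _ G (.inr (.inr a)) (.inr (.inl b)) h

@[elab_as_elim]
lemma edge_induction {P : (twoCorona G).edgeSet → Prop} (base : ∀ e, P (baseEdge G e))
    (spoke : ∀ a, P (spokeEdge G a)) (pendant : ∀ a, P (pendantEdge G a))
    (f : (twoCorona G).edgeSet) : P f := by
  obtain ⟨(e | a | a), rfl⟩ := edgeOfSum_surjective G f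
  exacts [base e, spoke a, pendant a]

variable (G)

noncomputable def edgeEquiv : G.edgeSet ⊕ V ⊕ V ≃ (twoCorona G).edgeSet :=
  Equiv.ofBijective _ ⟨edgeOfSum_injective G, edgeOfSum_surjective G⟩

def root : V ⊕ V ⊕ V → V :=
  Sum.elim id (Sum.elim id id)

def middleIncl : V ⊕ G.edgeSet → (V ⊕ V ⊕ V) ⊕ (twoCorona G).edgeSet :=
  Sum.map .inl (baseEdge G)

-- Collapses each attached path `v — v' — v''`, together with its two edges, onto `v`.
noncomputable def middleProj : (V ⊕ V ⊕ V) ⊕ (twoCorona G).edgeSet → V ⊕ G.edgeSet :=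
  Sum.elim (.inl ∘ root) (Sum.elim .inr (.inl ∘ Sum.elim id id) ∘ (edgeEquiv G).symm)

def pendantPart : Set ((V ⊕ V ⊕ V) ⊕ (twoCorona G).edgeSet) :=
  Set.range (fun a => .inl (.inr (.inr a))) ∪ Set.range (fun a => .inr (pendantEdge G a))

variable {G}

@[simp] lemma middleProj_inl (x : V ⊕ V ⊕ V) : middleProj G (.inl x) = .inl (root x) := rfl

lemma middleProj_inr_edgeEquiv (x : G.edgeSet ⊕ V ⊕ V) :
    middleProj G (.inr (edgeEquiv G x)) = Sum.elim .inr (.inl ∘ Sum.elim id id) x := by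
  simp [middleProj]

@[simp] lemma middleProj_baseEdge (e : G.edgeSet) :
    middleProj G (.inr (baseEdge G e)) = .inr e :=
  middleProj_inr_edgeEquiv (.inl e)

@[simp] lemma middleProj_spokeEdge (a : V) : middleProj G (.inr (spokeEdge G a)) = .inl a :=
  middleProj_inr_edgeEquiv (.inr (.inl a))

@[simp] lemma middleProj_pendantEdge (a : V) : middleProj G (.inr (pendantEdge G a)) = .inl a :=
  middleProj_inr_edgeEquiv (.inr (.inr a))

lemma middleProj_middleIncl (u : V ⊕ G.edgeSet) : middleProj G (middleIncl G u) = u := by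
  rcases u with v | e
  · rfl
  · exact middleProj_baseEdge e

lemma middleGraph_adj_middleIncl {u u' : V ⊕ G.edgeSet} :
    (middleGraph (twoCorona G)).Adj (middleIncl G u) (middleIncl G u') ↔
      (middleGraph G).Adj u u' := by
  rcases u with v | e <;> rcases u' with v' | e' <;> simp [middleIncl]

lemma middleIncl_notMem_pendantPart (u : V ⊕ G.edgeSet) : middleIncl G u ∉ pendantPart G := by
  rcases u with v | e <;> simp [middleIncl, pendantPart]

lemma notMem_pendantPart_of_adj_middleIncl {u : V ⊕ G.edgeSet}
    {w : (V ⊕ V ⊕ V) ⊕ (twoCorona G).edgeSet}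
    (h : (middleGraph (twoCorona G)).Adj (middleIncl G u) w) : w ∉ pendantPart G := by
  rcases u with v | e <;> rcases w with x | f
  · exact h.elim
  · induction f using edge_induction <;> simp_all [middleIncl, pendantPart]
  · simp only [middleIncl, Sum.map_inr, middleGraph_adj_inr_inl, mem_baseEdge] at h
    obtain ⟨v, -, rfl⟩ := h
    simp [pendantPart]
  · induction f using edge_induction <;> simp_all [middleIncl, pendantPart]

lemma middleProj_eq_or_adj_of_adj_middleIncl {u : V ⊕ G.edgeSet}
    {w : (V ⊕ V ⊕ V) ⊕ (twoCorona G).edgeSet}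
    (h : (middleGraph (twoCorona G)).Adj (middleIncl G u) w) :
    middleProj G w = u ∨ (middleGraph G).Adj u (middleProj G w) := by
  rcases u with v | e <;> rcases w with x | f
  · exact h.elim
  · induction f using edge_induction <;> simp_all [middleIncl]
  · simp only [middleIncl, Sum.map_inr, middleGraph_adj_inr_inl, mem_baseEdge] at h
    obtain ⟨v, hv, rfl⟩ := h
    simp [root, hv]
  · induction f using edge_induction <;> simp_all [middleIncl]

lemma exists_mem_inter_pendantPart {T : Set ((V ⊕ V ⊕ V) ⊕ (twoCorona G).edgeSet)}
    (hT : IsDomSet (middleGraph (twoCorona G)) T) (a : V) :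
    ∃ w ∈ T ∩ pendantPart G, middleProj G w = .inl a := by
  rcases hT (.inl (.inr (.inr a))) with h | ⟨w, hw, hadj⟩
  · exact ⟨_, ⟨h, .inl ⟨a, rfl⟩⟩, rfl⟩
  rcases w with x | f
  · exact hadj.elim
  induction f using edge_induction with
  | base e => simp at hadj
  | spoke b => simp at hadj
  | pendant b =>
    obtain rfl : a = b := by simpa using hadj
    exact ⟨_, ⟨hw, .inr ⟨a, rfl⟩⟩, middleProj_pendantEdge a⟩

lemma isDomSet_middleIncl_image_union {S : Set (V ⊕ G.edgeSet)}
    (hS : IsDomSet (middleGraph G) S) :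
    IsDomSet (middleGraph (twoCorona G))
      (middleIncl G '' S ∪ Set.range fun a => .inr (pendantEdge G a)) := by
  set T := middleIncl G '' S ∪ Set.range fun a => .inr (pendantEdge G a)
  have hincl (u : V ⊕ G.edgeSet) :
      middleIncl G u ∈ T ∨ ∃ t ∈ T, (middleGraph (twoCorona G)).Adj (middleIncl G u) t := by
    rcases hS u with h | ⟨s, hs, hadj⟩
    · exact Or.inl (Or.inl ⟨u, h, rfl⟩)
    · exact Or.inr ⟨_, Or.inl ⟨s, hs, rfl⟩, middleGraph_adj_middleIncl.2 hadj⟩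
  rintro ((v | a | a) | f)
  · exact hincl (.inl v)
  · exact Or.inr ⟨_, Or.inr ⟨a, rfl⟩, by simp⟩
  · exact Or.inr ⟨_, Or.inr ⟨a, rfl⟩, by simp⟩
  induction f using edge_induction with
  | base e => exact hincl (.inr e)
  | spoke a =>
    exact Or.inr ⟨_, Or.inr ⟨a, rfl⟩, by simp [(pendantEdge_ne_spokeEdge a a).symm]⟩
  | pendant a => exact Or.inl (Or.inr ⟨a, rfl⟩)

end twoCorona

open twoCorona

lemma domNum_middleGraph_twoCorona_le {V : Type*} [Finite V] (G : SimpleGraph V) :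
    domNum (middleGraph (twoCorona G)) ≤ Nat.card V + domNum (middleGraph G) := by
  obtain ⟨S, hS, hcard⟩ := exists_isDomSet_ncard_eq_domNum (middleGraph G)
  have hpendant : (Set.range fun a => Sum.inr (pendantEdge G a) :
      Set ((V ⊕ V ⊕ V) ⊕ (twoCorona G).edgeSet)).ncard ≤ Nat.card V := by
    rw [← Set.image_univ, ← Set.ncard_univ V]
    exact Set.ncard_image_le Set.finite_univ
  calc domNum (middleGraph (twoCorona G))
      ≤ (middleIncl G '' S ∪ Set.range fun a => .inr (pendantEdge G a)).ncard :=
        domNum_le_ncard (isDomSet_middleIncl_image_union hS)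
    _ ≤ S.ncard + Nat.card V :=
        (Set.ncard_union_le _ _).trans (add_le_add (Set.ncard_image_le S.toFinite) hpendant)
    _ = Nat.card V + domNum (middleGraph G) := by rw [hcard, add_comm]

lemma le_domNum_middleGraph_twoCorona {V : Type*} [Finite V] (G : SimpleGraph V) :
    Nat.card V + domNum (middleGraph G) ≤ domNum (middleGraph (twoCorona G)) := by
  obtain ⟨T, hT, hcard⟩ := exists_isDomSet_ncard_eq_domNum (middleGraph (twoCorona G))
  have hdom : IsDomSet (middleGraph G) (middleProj G '' (T \ pendantPart G)) := by
    refine isDomSet_image_of_retraction _ (middleIncl G) middleProj_middleIncl (fun u => ?_)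
      fun u w => middleProj_eq_or_adj_of_adj_middleIncl
    rcases hT (middleIncl G u) with h | ⟨t, ht, hadj⟩
    · exact Or.inl ⟨h, middleIncl_notMem_pendantPart u⟩
    · exact Or.inr ⟨t, ⟨ht, notMem_pendantPart_of_adj_middleIncl hadj⟩, hadj⟩
  have hpendant : Nat.card V ≤ (T ∩ pendantPart G).ncard :=
    calc Nat.card V = (Set.range (Sum.inl : V → V ⊕ G.edgeSet)).ncard :=
          (Set.ncard_range_of_injective Sum.inl_injective).symm
      _ ≤ (middleProj G '' (T ∩ pendantPart G)).ncard := by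
          refine Set.ncard_le_ncard ?_ (Set.toFinite _)
          rintro _ ⟨a, rfl⟩
          exact exists_mem_inter_pendantPart hT a
      _ ≤ (T ∩ pendantPart G).ncard := Set.ncard_image_le (Set.toFinite _)
  calc Nat.card V + domNum (middleGraph G)
      ≤ (T ∩ pendantPart G).ncard + (T \ pendantPart G).ncard :=
        add_le_add hpendant ((domNum_le_ncard hdom).trans (Set.ncard_image_le (Set.toFinite _)))
    _ = domNum (middleGraph (twoCorona G)) := by
        rw [Set.ncard_inter_add_ncard_sdiff_eq_ncard T _ (Set.toFinite T), hcard]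

theorem domNum_middle_twoCorona_general {V : Type*} [Fintype V] (G : SimpleGraph V) (n : ℕ)
    (hord : Fintype.card V = n) :
    domNum (middleGraph (twoCorona G)) = n + domNum (middleGraph G) := by
  rw [← hord, ← Nat.card_eq_fintype_card]
  exact (domNum_middleGraph_twoCorona_le G).antisymm (le_domNum_middleGraph_twoCorona G)

/-- For a connected graph `G` of order `n ≥ 2`,
`γ(M(G ∘ P₂)) = n + γ(M(G))`. -/
theorem domNum_middle_twoCorona {V : Type*} [Fintype V] (G : SimpleGraph V) (n : ℕ)
    (hord : Fintype.card V = n) (hn : 2 ≤ n) (hconn : G.Connected) :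
    domNum (middleGraph (twoCorona G)) = n + domNum (middleGraph G) :=
  domNum_middle_twoCorona_general G n hord
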